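/- arXiv:2005.11415 — 3 statements merged into one kernel-verified Lean document; each statement's English description precedes it below -/
import Mathlib

section
/- Let η: X → F_1 be the blow-up at μ ≥ 9 points p_1, ..., p_μ on distinct fibers with L = η^*(2s+4f) - Σ e_i ample. Then there is no irreducible curve C ∈ |2s+3f| having a double point at one of the p_i and passing through 8 more of the points; indeed for such a configuration the proper transform C' satisfies C'·L = 9 - ν where ν is the number of points on C. -/
/-- Intersection form on the Picard lattice of the Hirzebruch surface `F_e`:
`(a, b)` represents the class `a·s + b·f`, with `s² = -e`, `s·f = 1`, `f² = 0`. -/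
def interF (e : ℤ) (D E : ℤ × ℤ) : ℤ :=
  -e * D.1 * E.1 + D.1 * E.2 + D.2 * E.1

/-- Canonical class of `F_e`: `K = -2s - (e+2)f`. -/
def KF (e : ℤ) : ℤ × ℤ := (-2, -(e + 2))

/-- Abstract geometric data of the Hirzebruch surface `F_e`, recording which
divisor classes are ample, very ample, nef, classes of irreducible curves, etc.,
together with standard true geometric facts about `F_e`. -/
structure HirzebruchGeom (e : ℤ) where
  IsIrredCurve : ℤ × ℤ → Prop
  Ample : ℤ × ℤ → Prop
  VeryAmple : ℤ × ℤ → Prop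
  Nef : ℤ × ℤ → Prop
  DisjointCurves : ℤ × ℤ → ℤ × ℤ → Prop
  h0 : ℤ × ℤ → ℕ
  veryAmple_ample : ∀ {L}, VeryAmple L → Ample L
  ample_nef : ∀ {L}, Ample L → Nef L
  ample_pos : ∀ {L C}, Ample L → IsIrredCurve C → 0 < interF e L C
  nakai : ∀ {L}, 0 < interF e L L →
    (∀ C, IsIrredCurve C → 0 < interF e L C) → Ample L
  irred_s : IsIrredCurve (1, 0)
  irred_f : IsIrredCurve (0, 1)
  irred_classify : ∀ {C}, IsIrredCurve C →
    C = (1, 0) ∨ C = (0, 1) ∨ (1 ≤ C.1 ∧ e * C.1 ≤ C.2)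
  nef_iff : ∀ a b : ℤ, Nef (a, b) ↔ 0 ≤ a ∧ e * a ≤ b
  va_base : VeryAmple (1, e + 1)
  va_add_nef : ∀ {L M}, VeryAmple L → Nef M → VeryAmple (L + M)
  disjoint_of_inter_zero : ∀ {C D}, IsIrredCurve C → IsIrredCurve D →
    C ≠ D → interF e C D = 0 → DisjointCurves C D
  h0_eq_chi : ∀ {L}, Ample L → (h0 L : ℤ) = interF e L (L - KF e) / 2 + 1

/-- Intersection form on the Picard lattice of the blow-up of `F_1` at `μ` points:
`((a,b), m)` represents `a·η*s + b·η*f + Σ m_i e_i`, with `e_i² = -1`, `e_i·e_j = 0`. -/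
def binter (μ : ℕ) (D E : (ℤ × ℤ) × (Fin μ → ℤ)) : ℤ :=
  interF 1 D.1 E.1 - ∑ i, D.2 i * E.2 i

/-- The polarization `L = η*(2s+4f) - Σ e_i` (sectional genus 2). -/
def L2 (μ : ℕ) : (ℤ × ℤ) × (Fin μ → ℤ) := ((2, 4), fun _ => -1)

/-- The polarization `L = η*(2s+(g+2)f) - Σ e_i` (sectional genus g). -/
def Lg (μ : ℕ) (g : ℤ) : (ℤ × ℤ) × (Fin μ → ℤ) := ((2, g + 2), fun _ => -1)

/-- Canonical class of the blow-up: `K = η*(-2s-3f) + Σ e_i`. -/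
def Kb (μ : ℕ) : (ℤ × ℤ) × (Fin μ → ℤ) := ((-2, -3), fun _ => 1)

/-- The fiber class `F = η*f`. -/
def Fb (μ : ℕ) : (ℤ × ℤ) × (Fin μ → ℤ) := ((0, 1), fun _ => 0)

/-- Abstract geometric data of the blow-up `η : X → F_1` at `μ` points
`p_1, …, p_μ` lying on distinct fibers; `onS i` records whether `p_i` lies on
the minimal section `s`. -/
structure BlowupF1Geom (μ : ℕ) where
  onS : Fin μ → Bool
  IsIrred : (ℤ × ℤ) × (Fin μ → ℤ) → Prop
  IsSmoothIrred : (ℤ × ℤ) × (Fin μ → ℤ) → Prop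
  Ample : (ℤ × ℤ) × (Fin μ → ℤ) → Prop
  VeryAmple : (ℤ × ℤ) × (Fin μ → ℤ) → Prop
  Nef : (ℤ × ℤ) × (Fin μ → ℤ) → Prop
  Spanned : (ℤ × ℤ) × (Fin μ → ℤ) → Prop
  smooth_irred : ∀ {C}, IsSmoothIrred C → IsIrred C
  veryAmple_ample : ∀ {A}, VeryAmple A → Ample A
  ample_nef : ∀ {A}, Ample A → Nef A
  ample_pos : ∀ {A C}, Ample A → IsIrred C → 0 < binter μ A C
  nef_nonneg : ∀ {A C}, Nef A → IsIrred C → 0 ≤ binter μ A C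
  exceptional_irred : ∀ i : Fin μ,
    IsIrred ((0, 0), fun j => if j = i then 1 else 0)
  sTransform_irred : IsIrred ((1, 0), fun i => if onS i then -1 else 0)
  irred_distinct_nonneg : ∀ {C D}, IsIrred C → IsIrred D → C ≠ D →
    0 ≤ binter μ C D
  lines_meet_once : ∀ {A C D}, VeryAmple A → IsIrred C → IsIrred D →
    C ≠ D → binter μ C A = 1 → binter μ D A = 1 → binter μ C D ≤ 1

lemma keysum (μ ν : ℕ) (h1 : 1 ≤ ν) (h2 : ν ≤ μ) :
    ∑ i : Fin μ, (if (i : ℕ) = 0 then (-2:ℤ) else if (i : ℕ) < ν then -1 else 0) * (-1)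
      = ν + 1 := by
  have : ∀ i : Fin μ, (if (i : ℕ) = 0 then (-2:ℤ) else if (i : ℕ) < ν then -1 else 0) * (-1)
      = (if (i : ℕ) < ν then ((if (i : ℕ) = 0 then (2:ℤ) else 1)) else 0) := by
    intro i
    rcases Nat.eq_zero_or_pos (i : ℕ) with h | h
    · simp [h, Nat.lt_of_lt_of_le h1 (le_refl ν), h1]
    · have : (i : ℕ) ≠ 0 := by omega
      by_cases hlt : (i : ℕ) < ν <;> simp [this, hlt]
  rw [Finset.sum_congr rfl (fun i _ => this i)]
  rw [Fin.sum_univ_eq_sum_range (fun i => if i < ν then (if i = 0 then (2:ℤ) else 1) else 0) μ]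
  rw [← Finset.sum_subset (Finset.range_subset_range.2 h2)]
  · have : ∀ i ∈ Finset.range ν, (if i < ν then (if i = 0 then (2:ℤ) else 1) else 0)
        = 1 + (if i = 0 then 1 else 0) := by
      intro i hi
      simp at hi
      simp [hi]
      split <;> ring
    rw [Finset.sum_congr rfl this, Finset.sum_add_distrib]
    have hν : ν ≠ 0 := by omega
    simp [Finset.sum_ite_eq' (Finset.range ν) 0 (fun _ => (1:ℤ)), hν]

  · intro i _ hi
    simp at hi
    simp [hi, Nat.not_lt_of_le hi]

/-- For `mu >= 9` blown-up points and `L = eta*(2s+4f) - sum e_i` ample: the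
proper transform `C' = eta*(2s+3f) - 2e_1 - sum_(j=2..nu) e_j` of a curve in
`|2s+3f|` with a double point at `p_1` passing through `nu - 1` further points
satisfies `C'·L = 9 - nu`; in particular there is no irreducible such curve
through `9` of the points (a double point at one of them and `8` more). -/
theorem stmt9 (μ : ℕ) (hμ : 9 ≤ μ) (S : BlowupF1Geom μ)
    (hample : S.Ample (L2 μ)) :
    (∀ ν : ℕ, 1 ≤ ν → ν ≤ μ →
      binter μ ((2, 3), fun i => if (i : ℕ) = 0 then -2
        else if (i : ℕ) < ν then -1 else 0) (L2 μ) = 9 - ν) ∧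
    ¬ S.IsIrred ((2, 3), fun i => if (i : ℕ) = 0 then -2
        else if (i : ℕ) < 9 then -1 else 0) := by
  have main : ∀ ν : ℕ, 1 ≤ ν → ν ≤ μ →
      binter μ ((2, 3), fun i => if (i : ℕ) = 0 then -2
        else if (i : ℕ) < ν then -1 else 0) (L2 μ) = 9 - ν := by
    intro ν h1 h2
    unfold binter L2
    rw [keysum μ ν h1 h2]
    simp [interF]
    ring
  refine ⟨main, fun hirr => ?_⟩
  have hpos := S.ample_pos hample hirr
  have hsym : binter μ (L2 μ) ((2, 3), fun i => if (i : ℕ) = 0 then -2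
        else if (i : ℕ) < 9 then -1 else 0)
      = binter μ ((2, 3), fun i => if (i : ℕ) = 0 then -2
        else if (i : ℕ) < 9 then -1 else 0) (L2 μ) := by
    unfold binter interF
    rw [Finset.sum_congr rfl (fun (i : Fin μ) (_ : i ∈ Finset.univ) =>
      mul_comm ((L2 μ).2 i) (if (i : ℕ) = 0 then (-2:ℤ) else if (i : ℕ) < 9 then -1 else 0))]
    ring
  rw [hsym, main 9 (by norm_num) hμ] at hpos
  norm_num at hpos
end

section
/- Let (X, L) be a pre-conic fibration over P^1 with fiber F, and suppose -K_X is nef. Then A_m := -K_X + mF is ample for every positive integer m. -/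
/-- An abstract (pre-)conic fibration over `P¹`: a smooth rational surface with
Picard group `P`, intersection form `inter`, canonical class `K` and fiber
class `F` with `K·F = -2`, `F² = 0`, together with standard positivity notions
and true geometric facts (Nakai–Moishezon, Reider's criterion, the genus
formula, and the structure of fiber components). -/
structure ConicFib (P : Type*) [AddCommGroup P] where
  inter : P →+ P →+ ℤ
  inter_symm : ∀ D E : P, inter D E = inter E D
  K : P
  F : P
  IsIrred : P → Prop
  Eff : P → Prop
  Ample : P → Prop
  Nef : P → Prop
  VeryAmple : P → Prop
  Spanned : P → Prop
  Big : P → Prop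
  KF_eq : inter K F = -2
  FF_eq : inter F F = 0
  nef_F : Nef F
  spanned_F : Spanned F
  ample_pos : ∀ {A C}, Ample A → IsIrred C → 0 < inter A C
  ample_self_pos : ∀ {A}, Ample A → 0 < inter A A
  nef_nonneg : ∀ {A C}, Nef A → IsIrred C → 0 ≤ inter A C
  nef_self_nonneg : ∀ {A}, Nef A → 0 ≤ inter A A
  nef_add : ∀ {A B}, Nef A → Nef B → Nef (A + B)
  nakai : ∀ {A}, 0 < inter A A → (∀ C, IsIrred C → 0 < inter A C) → Ample A
  fiber_comp_K_neg : ∀ {C}, IsIrred C → inter F C = 0 → inter K C < 0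
  veryAmple_ample : ∀ {A}, VeryAmple A → Ample A
  ample_nef : ∀ {A}, Ample A → Nef A
  va_add_spanned : ∀ {A B}, VeryAmple A → Spanned B → VeryAmple (A + B)
  big_nef_pos : ∀ {A}, Nef A → Big A → 0 < inter A A
  genus_formula : ∀ {C}, IsIrred C → ∃ p : ℤ, 0 ≤ p ∧ inter C (K + C) = 2 * p - 2
  reider : ∀ {M}, Nef M → 10 ≤ inter M M →
    (∀ D : P, Eff D → D ≠ 0 →
      ¬ ((inter M D = 0 ∧ (inter D D = -2 ∨ inter D D = -1)) ∨
         (inter M D = 1 ∧ (inter D D = -1 ∨ inter D D = 0)) ∨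
         (inter M D = 2 ∧ inter D D = 0))) →
    VeryAmple (K + M)

/-- For a pre-conic fibration with `-K` nef, `A_m = -K + mF` is ample for
every positive integer `m`. -/
theorem stmt10 {P : Type*} [AddCommGroup P] (S : ConicFib P)
    (hnef : S.Nef (-S.K)) (m : ℤ) (hm : 0 < m) :
    S.Ample (-S.K + m • S.F) := by
  have hKF' : S.inter S.F S.K = -2 := by rw [S.inter_symm]; exact S.KF_eq
  have expand : ∀ D : P, S.inter (-S.K + m • S.F) D =
      -(S.inter S.K D) + m * S.inter S.F D := by
    intro D
    simp [map_add, map_neg, map_zsmul, smul_eq_mul]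
  apply S.nakai
  · rw [expand]
    simp only [map_add, map_neg, map_zsmul, smul_eq_mul, S.KF_eq, S.FF_eq, hKF']
    have hKK : 0 ≤ S.inter (-S.K) (-S.K) := S.nef_self_nonneg hnef
    simp only [map_neg, AddMonoidHom.neg_apply, neg_neg] at hKK
    nlinarith
  · intro C hC
    rw [expand]
    have h1 : 0 ≤ S.inter (-S.K) C := S.nef_nonneg hnef hC
    have h2 : 0 ≤ S.inter S.F C := S.nef_nonneg S.nef_F hC
    simp only [map_neg, AddMonoidHom.neg_apply] at h1
    rcases h2.lt_or_eq with h | h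
    · nlinarith
    · have := S.fiber_comp_K_neg hC h.symm
      nlinarith
end

section
/- Let η: X → F_1 be the blow-up at μ ≤ 7 points on distinct fibers with L = η^*(2s+4f) - Σ e_i very ample, and let C ⊂ X be a line (C·L = 1) with C^2 = -2 which is a section of the fibration. Then γ := η(C) is an irreducible section of F_1, γ ∈ |s + αf| with α ∈ {0,1,2,3}, and γ contains exactly ε = 2α + 1 of the points p_i. -/
/-- For the blow-up of `F_1` at `mu <= 7` points with `L = eta*(2s+4f) - sum e_i`
very ample: any line `C` (`C·L = 1`) with `C^2 = -2` which is a section of the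
fibration (`C·F = 1`) is the proper transform of an irreducible section
`gamma ∈ |s + alpha*f|` of `F_1` with `alpha ∈ {0,1,2,3}`, containing
exactly `epsilon = 2*alpha + 1` of the blown-up points. -/
theorem stmt17 (μ : ℕ) (hμ : μ ≤ 7) (S : BlowupF1Geom μ)
    (hVA : S.VeryAmple (L2 μ))
    (C : (ℤ × ℤ) × (Fin μ → ℤ)) (hC : S.IsIrred C)
    (hCL : binter μ C (L2 μ) = 1)
    (hC2 : binter μ C C = -2)
    (hCF : binter μ C (Fb μ) = 1) :
    ∃ α : ℤ, 0 ≤ α ∧ α ≤ 3 ∧ C.1 = (1, α) ∧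
      (∀ i : Fin μ, C.2 i = 0 ∨ C.2 i = -1) ∧
      ((Finset.univ.filter fun i : Fin μ => C.2 i = -1).card : ℤ)
        = 2 * α + 1 := by
  -- a = C.1.1 = 1 from C·F = 1
  have ha : C.1.1 = 1 := by
    simp [binter, interF, Fb] at hCF; linarith
  set α := C.1.2 with hα
  -- each multiplicity is 0 or -1
  have hm : ∀ i : Fin μ, C.2 i = 0 ∨ C.2 i = -1 := by
    intro i
    set Ei : (ℤ × ℤ) × (Fin μ → ℤ) := ((0, 0), fun j => if j = i then 1 else 0) with hEi
    have hIrrE := S.exceptional_irred i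
    have hne : C ≠ Ei := by
      intro h
      have : C.1.1 = 0 := by rw [h]
      omega
    have hEL : binter μ Ei (L2 μ) = 1 := by
      simp [binter, interF, L2, hEi]
    have hCE : binter μ C Ei = -C.2 i := by
      simp [binter, interF, hEi, mul_ite]
    have h1 : binter μ C Ei ≤ 1 :=
      S.lines_meet_once hVA hC hIrrE hne hCL hEL
    have h2 : 0 ≤ binter μ C Ei :=
      S.irred_distinct_nonneg hC hIrrE hne
    rw [hCE] at h1 h2
    omega
  -- sum identities
  have hsum : ∑ i, C.2 i = -1 - 2 * α := by
    have : binter μ C (L2 μ) = -C.1.1 * 2 + C.1.1 * 4 + C.1.2 * 2 + ∑ i, C.2 i := by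
      simp [binter, interF, L2]
    rw [hCL] at this
    rw [ha] at this
    linarith
  have hsq : ∑ i, C.2 i * C.2 i = 2 * α + 1 := by
    have : binter μ C C = -C.1.1 * C.1.1 + C.1.1 * C.1.2 + C.1.2 * C.1.1
        - ∑ i, C.2 i * C.2 i := by
      simp [binter, interF]
    rw [hC2, ha] at this
    linarith
  -- card identity
  have hcard : ((Finset.univ.filter fun i : Fin μ => C.2 i = -1).card : ℤ)
      = ∑ i, C.2 i * C.2 i := by
    rw [Finset.card_filter]
    push_cast
    refine Finset.sum_congr rfl fun i _ => ?_
    rcases hm i with h | h <;> simp [h]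
  have hcard' : ((Finset.univ.filter fun i : Fin μ => C.2 i = -1).card : ℤ)
      = 2 * α + 1 := by rw [hcard, hsq]
  -- bounds on α
  have hle : (Finset.univ.filter fun i : Fin μ => C.2 i = -1).card ≤ μ := by
    simpa using Finset.card_filter_le Finset.univ (fun i : Fin μ => C.2 i = -1)
  have hα0 : 0 ≤ α := by
    have : (0 : ℤ) ≤ 2 * α + 1 := hcard' ▸ Int.natCast_nonneg _
    omega
  have hα3 : α ≤ 3 := by
    have h7 : ((Finset.univ.filter fun i : Fin μ => C.2 i = -1).card : ℤ) ≤ 7 := by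
      have := le_trans hle hμ
      exact_mod_cast this
    omega
  exact ⟨α, hα0, hα3, by rw [← ha], hm, hcard'⟩
end
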